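/- arXiv:1212.4193 — 4 statements merged into one kernel-verified Lean document; each statement's English description precedes it below -/
import Mathlib

section
/- Let E be an evolutionary system satisfying A1, and let Ē be its closure. Then for every weakly open set A ⊆ X, the weak ω-limit sets of A with respect to E and Ē coincide: ω_w(A) = ω̄_w(A). -/
structure EvolutionarySystem (X : Type*) where
  E : ℝ → Set (ℝ → X)
  Ec : Set (ℝ → X)
  nonempty : (E 0).Nonempty
  shift : ∀ (s T : ℝ), E (T + s) = {u | (fun t => u (t + s)) ∈ E T}
  restrict : ∀ (T₁ T₂ : ℝ), T₁ ≤ T₂ → E T₁ ⊆ E T₂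
  complete : Ec = {u | ∀ T, u ∈ E T}

/- Throughout, the `MetricSpace` instance on `X` is the weak metric `d_w`,
and `X` is assumed `d_w`-compact. -/

/-- Closure of `E([τ,∞))` in `C([τ,∞); X_w)`. -/
def closE {X : Type*} [MetricSpace X] (es : EvolutionarySystem X) (τ : ℝ) :
    Set (ℝ → X) :=
  {u | ∃ un : ℕ → ℝ → X, (∀ n, un n ∈ es.E τ) ∧
    ∀ b, τ ≤ b → ∀ ε > 0, ∃ N, ∀ n ≥ N, ∀ t ∈ Set.Icc τ b, dist (un n t) (u t) < ε}

/-- A1: precompactness of `E([0,∞))` in `C([0,∞); X_w)`. -/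
def A1 {X : Type*} [MetricSpace X] (es : EvolutionarySystem X) : Prop :=
  ∀ un : ℕ → ℝ → X, (∀ n, un n ∈ es.E 0) →
    ∃ φ : ℕ → ℕ, StrictMono φ ∧ ∃ u : ℝ → X,
      ∀ b, (0:ℝ) ≤ b → ∀ ε > 0, ∃ N, ∀ n ≥ N, ∀ t ∈ Set.Icc (0:ℝ) b,
        dist (un (φ n) t) (u t) < ε

/-- `R(t)A` for `E`. -/
def ESmap {X : Type*} (es : EvolutionarySystem X) (t : ℝ) (A : Set X) : Set X :=
  {x | ∃ u ∈ es.E 0, u 0 ∈ A ∧ u t = x}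

/-- `R̄(t)A` for the closure `Ē`. -/
def ESmapBar {X : Type*} [MetricSpace X] (es : EvolutionarySystem X) (t : ℝ) (A : Set X) :
    Set X :=
  {x | ∃ u ∈ closE es 0, u 0 ∈ A ∧ u t = x}

/-- Weak ω-limit associated to a map `R`. -/
def omegaLim {X : Type*} [MetricSpace X] (R : ℝ → Set X → Set X) (A : Set X) : Set X :=
  ⋂ (T : ℝ) (_ : 0 ≤ T), closure (⋃ (t : ℝ) (_ : T ≤ t), R t A)

/-- if `E` satisfies A1 then for every weakly open `A ⊆ X` the weak ω-limits of
`A` with respect to `E` and its closure `Ē` coincide. -/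
theorem stmt5 {X : Type*} [MetricSpace X] [CompactSpace X]
    (es : EvolutionarySystem X) (hA1 : A1 es)
    (A : Set X) (hA : IsOpen A) :
    omegaLim (ESmap es) A = omegaLim (ESmapBar es) A := by
  apply Set.Subset.antisymm
  · -- E 0 ⊆ closE es 0, so ESmap ⊆ ESmapBar
    apply Set.iInter_mono; intro T
    apply Set.iInter_mono; intro _
    apply closure_mono
    apply Set.iUnion_mono; intro t
    apply Set.iUnion_mono; intro _
    rintro x ⟨u, hu, hu0, hut⟩
    refine ⟨u, ⟨fun _ => u, fun _ => hu, ?_⟩, hu0, hut⟩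
    intro b _ ε hε
    exact ⟨0, fun n _ t _ => by simpa using hε⟩
  · intro x hx
    simp only [omegaLim, Set.mem_iInter] at hx ⊢
    intro T hT
    have key : (⋃ (t : ℝ) (_ : T ≤ t), ESmapBar es t A) ⊆
        closure (⋃ (t : ℝ) (_ : T ≤ t), ESmap es t A) := by
      rintro y hy
      simp only [Set.mem_iUnion] at hy
      obtain ⟨t, hTt, u, ⟨un, hun, hconv⟩, hu0, hut⟩ := hy
      have ht0 : (0:ℝ) ≤ t := hT.trans hTt
      rw [Metric.mem_closure_iff]
      intro ε hε
      obtain ⟨δ, hδ, hball⟩ := Metric.isOpen_iff.mp hA (u 0) hu0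
      obtain ⟨N, hN⟩ := hconv t ht0 (min ε δ) (lt_min hε hδ)
      have h0 : dist (un N 0) (u 0) < min ε δ :=
        hN N le_rfl 0 ⟨le_rfl, ht0⟩
      have htN : dist (un N t) (u t) < min ε δ :=
        hN N le_rfl t ⟨ht0, le_rfl⟩
      refine ⟨un N t, ?_, ?_⟩
      · simp only [Set.mem_iUnion]
        exact ⟨t, hTt, un N, hun N, hball (h0.trans_le (min_le_right _ _)), rfl⟩
      · rw [← hut, dist_comm]
        exact htN.trans_le (min_le_left _ _)
    exact (closure_minimal key isClosed_closure) (hx T hT)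
end

section
/- Let E be an evolutionary system satisfying A1 and Ē its closure. Then the weak uniform global attractors of E and Ē coincide and equal { u(0) : u ∈ Ē((−∞,∞)) }, the set of initial values of complete trajectories of Ē. -/
/-- `𝒜` attracts every `B ⊆ X` uniformly (in the metric of the instance). -/
def Attracts {X : Type*} [MetricSpace X] (R : ℝ → Set X → Set X) (𝒜 : Set X) : Prop :=
  ∀ B : Set X, ∀ ε > 0, ∃ t₀ : ℝ, ∀ t, t₀ ≤ t → R t B ⊆ {x | ∃ a ∈ 𝒜, dist x a < ε}

/-- `𝒜` is the (weak) global attractor for the map `R`: a minimal closed attracting set. -/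
def IsGA {X : Type*} [MetricSpace X] (R : ℝ → Set X → Set X) (𝒜 : Set X) : Prop :=
  IsClosed 𝒜 ∧ Attracts R 𝒜 ∧ ∀ 𝒜' : Set X, IsClosed 𝒜' → Attracts R 𝒜' → 𝒜 ⊆ 𝒜'

set_option linter.unusedSectionVars false

def UC {X : Type*} [MetricSpace X] (m : ℕ) (s : ℕ → ℝ → X) (u : ℝ → X) : Prop :=
  ∀ b : ℝ, ∀ ε > 0, ∃ N, ∀ n ≥ N, ∀ t ∈ Set.Icc (-(m:ℝ)) b, dist (s n t) (u t) < ε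

lemma step_lemma {X : Type*} [MetricSpace X] (es : EvolutionarySystem X) (hA1 : A1 es)
    (m : ℕ) (w : ℕ → ℝ → X) (N : ℕ) (h : ∀ n ≥ N, w n ∈ es.E (-(m:ℝ))) :
    ∃ φ : ℕ → ℕ, StrictMono φ ∧ ∃ u, UC m (fun n => w (φ n)) u := by
  set z : ℕ → ℝ → X := fun n t => w (n + N) (t - m) with hz_def
  have hz : ∀ n, z n ∈ es.E 0 := by
    intro n
    have h1 := h (n + N) (Nat.le_add_left _ _)
    have h2 : (0:ℝ) = -(m:ℝ) + m := by ring
    rw [h2, es.shift]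
    have : (fun t => z n (t + m)) = w (n + N) := by
      funext t; simp [hz_def]
    simpa [this] using h1
  obtain ⟨χ, hχ, u₀, hu₀⟩ := hA1 z hz
  refine ⟨fun n => χ n + N, fun a b hab => by simpa using hχ hab, fun t => u₀ (t + m), ?_⟩
  intro b ε hε
  obtain ⟨N₁, hN₁⟩ := hu₀ (max (b + m) 0) (le_max_right _ _) ε hε
  refine ⟨N₁, fun n hn t ht => ?_⟩
  have key : dist (z (χ n) (t + m)) (u₀ (t + m)) < ε := by
    apply hN₁ n hn
    exact ⟨by linarith [ht.1], le_max_of_le_left (by linarith [ht.2])⟩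
  simpa [hz_def] using key

lemma key_lemma {X : Type*} [MetricSpace X] (es : EvolutionarySystem X) (hA1 : A1 es)
    (w : ℕ → ℝ → X) (hmem : ∀ m : ℕ, ∃ K, ∀ n ≥ K, w n ∈ es.E (-(m:ℝ))) :
    ∃ δ : ℕ → ℕ, StrictMono δ ∧ ∃ u : ℝ → X,
      (∀ τ : ℝ, u ∈ closE es τ) ∧
      ∀ ε > 0, ∃ N, ∀ n ≥ N, dist (w (δ n) 0) (u 0) < ε := by
  classical
  -- step chooser, for arbitrary subsequence σ
  have step : ∀ σ : ℕ → ℕ, ∀ m : ℕ, ∃ φ : ℕ → ℕ, StrictMono φ ∧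
      ∃ u, (StrictMono σ → UC m (fun n => w (σ (φ n))) u) := by
    intro σ m
    by_cases hσ : StrictMono σ
    · obtain ⟨K, hK⟩ := hmem m
      obtain ⟨φ, hφ, u, hu⟩ := step_lemma es hA1 m (fun n => w (σ n)) K
        (fun n hn => hK (σ n) (hn.trans hσ.le_apply))
      exact ⟨φ, hφ, u, fun _ => hu⟩
    · exact ⟨id, strictMono_id, fun _ => (es.nonempty.some 0), fun h => absurd h hσ⟩
  choose φF hφF uF hUF using step
  -- nested subsequences
  set sig : ℕ → ℕ → ℕ := fun m => Nat.rec (φF id 0) (fun m p => p ∘ φF p (m + 1)) m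
    with hsig_def
  have sig_zero : sig 0 = φF id 0 := rfl
  have sig_succ : ∀ m, sig (m + 1) = sig m ∘ φF (sig m) (m + 1) := fun m => rfl
  have sig_mono : ∀ m, StrictMono (sig m) := by
    intro m
    induction m with
    | zero => exact hφF id 0
    | succ m ih => rw [sig_succ]; exact ih.comp (hφF (sig m) (m + 1))
  -- limits
  set U : ℕ → ℝ → X := fun m => Nat.rec (uF id 0) (fun m _ => uF (sig m) (m + 1)) m
    with hU_def
  have hUC : ∀ m, UC m (fun n => w (sig m n)) (U m) := by
    intro m
    cases m with
    | zero => exact hUF id 0 strictMono_id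
    | succ m => exact hUF (sig m) (m + 1) (sig_mono m)
  -- rho m d : the subsequence relating sig m to sig (m+d)
  set rho : ℕ → ℕ → ℕ → ℕ :=
    fun m d => Nat.rec id (fun d p => p ∘ φF (sig (m + d)) (m + d + 1)) d with hrho_def
  have rho_mono : ∀ m d, StrictMono (rho m d) := by
    intro m d
    induction d with
    | zero => exact strictMono_id
    | succ d ih => exact ih.comp (hφF _ _)
  have rho_spec : ∀ m d, sig (m + d) = sig m ∘ rho m d := by
    intro m d
    induction d with
    | zero => rfl
    | succ d ih =>
      show sig (m + d + 1) = sig m ∘ (rho m d ∘ φF (sig (m + d)) (m + d + 1))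
      rw [sig_succ (m + d), ih]
      rfl
  -- diagonal
  set δ : ℕ → ℕ := fun n => sig n n with hδ_def
  have hδmono : StrictMono δ := by
    apply strictMono_nat_of_lt_succ
    intro n
    have h1 : δ (n + 1) = sig n (φF (sig n) (n + 1) (n + 1)) := rfl
    rw [h1]
    exact (sig_mono n).lt_iff_lt.mpr (lt_of_lt_of_le (Nat.lt_succ_self n)
      (hφF (sig n) (n + 1)).le_apply)
  have hdiag : ∀ m n, m ≤ n → δ n = sig m (rho m (n - m) n) := by
    intro m n hmn
    have : sig n = sig m ∘ rho m (n - m) := by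
      have := rho_spec m (n - m)
      rwa [Nat.add_sub_cancel' hmn] at this
    rw [hδ_def]; simp only []
    rw [this]; rfl
  -- agreement of limits
  have agree : ∀ m m' : ℕ, m ≤ m' → ∀ t : ℝ, -(m : ℝ) ≤ t → U m t = U m' t := by
    intro m m' hmm' t ht
    apply eq_of_forall_dist_le
    intro ε hε
    obtain ⟨N₁, hN₁⟩ := hUC m t (ε / 2) (by linarith)
    obtain ⟨N₂, hN₂⟩ := hUC m' t (ε / 2) (by linarith)
    set k := max N₁ N₂
    have hsig' : sig m' = sig m ∘ rho m (m' - m) := by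
      have := rho_spec m (m' - m)
      rwa [Nat.add_sub_cancel' hmm'] at this
    have hm'le : -(m' : ℝ) ≤ -(m : ℝ) := by
      simp only [neg_le_neg_iff]; exact_mod_cast hmm'
    have d2 : dist (w (sig m' k) t) (U m' t) < ε / 2 :=
      hN₂ k (le_max_right _ _) t ⟨le_trans hm'le ht, le_refl t⟩
    have d1 : dist (w (sig m' k) t) (U m t) < ε / 2 := by
      rw [hsig']
      exact hN₁ (rho m (m' - m) k) (le_trans (le_max_left _ _) (rho_mono m (m' - m)).le_apply)
        t ⟨ht, le_refl t⟩
    calc dist (U m t) (U m' t) ≤ dist (w (sig m' k) t) (U m t) + dist (w (sig m' k) t) (U m' t) :=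
          dist_triangle_left _ _ _
      _ ≤ ε := by linarith
  -- the limit function
  set u : ℝ → X := fun t => U (Nat.ceil (max 0 (-t))) t with hu_def
  have hu_eq : ∀ (m : ℕ) (t : ℝ), -(m : ℝ) ≤ t → u t = U m t := by
    intro m t ht
    set m₀ := Nat.ceil (max 0 (-t)) with hm₀
    have hm₀t : -(m₀ : ℝ) ≤ t := by
      have : -t ≤ (m₀ : ℝ) := le_trans (le_max_right 0 (-t)) (Nat.le_ceil _)
      linarith
    have e1 : U m₀ t = U (max m₀ m) t := agree m₀ (max m₀ m) (le_max_left _ _) t hm₀t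
    have e2 : U m t = U (max m₀ m) t := agree m (max m₀ m) (le_max_right _ _) t ht
    rw [hu_def]; simp only []
    rw [e1, ← e2]
  -- uniform convergence of the diagonal
  have hUCδ : ∀ m : ℕ, UC m (fun n => w (δ n)) u := by
    intro m b ε hε
    obtain ⟨N, hN⟩ := hUC m b ε hε
    refine ⟨max N m, fun n hn t ht => ?_⟩
    have hmn : m ≤ n := le_trans (le_max_right _ _) hn
    have hNe : N ≤ rho m (n - m) n :=
      le_trans (le_trans (le_max_left _ _) hn) (rho_mono m (n - m)).le_apply
    show dist (w (δ n) t) (u t) < ε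
    rw [hdiag m n hmn, hu_eq m t ht.1]
    exact hN _ hNe t ht
  -- conclusion
  refine ⟨δ, hδmono, u, ?_, ?_⟩
  · intro τ
    set m := Nat.ceil (max 0 (-τ)) with hm
    have hmτ : -(m : ℝ) ≤ τ := by
      have : -τ ≤ (m : ℝ) := le_trans (le_max_right 0 (-τ)) (Nat.le_ceil _)
      linarith
    obtain ⟨K, hK⟩ := hmem m
    refine ⟨fun n => w (δ (n + K)), fun n => ?_, fun b hb ε hε => ?_⟩
    · exact es.restrict _ _ hmτ (hK (δ (n + K)) (le_trans (Nat.le_add_left _ _) hδmono.le_apply))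
    · obtain ⟨N, hN⟩ := hUCδ m b ε hε
      refine ⟨N, fun n hn t ht => ?_⟩
      exact hN (n + K) (le_trans hn (Nat.le_add_right _ _)) t ⟨le_trans hmτ ht.1, ht.2⟩
  · intro ε hε
    obtain ⟨N, hN⟩ := hUCδ 0 0 ε hε
    exact ⟨N, fun n hn => hN n hn 0 ⟨by simp, le_refl 0⟩⟩

/-- The candidate attractor: initial values of complete trajectories of the closure. -/
def Astar {X : Type*} [MetricSpace X] (es : EvolutionarySystem X) : Set X :=
  {x | ∃ u : ℝ → X, (∀ τ, u ∈ closE es τ) ∧ u 0 = x}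

section Main
variable {X : Type*} [MetricSpace X] (es : EvolutionarySystem X) (hA1 : A1 es)

/-- shifting a trajectory of `E (-t)` backwards gives a trajectory of `E 0`. -/
lemma shift_mem_E0 (v : ℝ → X) (t : ℝ) (hv : v ∈ es.E (-t)) :
    (fun s => v (s - t)) ∈ es.E 0 := by
  have h2 : (0:ℝ) = -t + t := by ring
  rw [h2, es.shift]
  have : (fun s => (fun s' => v (s' - t)) (s + t)) = v := by
    funext s; simp
  simpa [this] using hv

/-- shifting a trajectory of `E 0` forward by `t` gives a trajectory of `E (-t)`. -/
lemma shift_mem_Eneg (v : ℝ → X) (t : ℝ) (hv : v ∈ es.E 0) :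
    (fun s => v (s + t)) ∈ es.E (-t) := by
  have h2 : (0:ℝ) = -t + t := by ring
  rw [h2, es.shift] at hv
  exact hv

include hA1 in
lemma Astar_closed : IsClosed (Astar es) := by
  apply IsSeqClosed.isClosed
  intro x p hx hxp
  -- choose approximations
  have happ : ∀ k : ℕ, ∃ v : ℝ → X, v ∈ es.E (-(k:ℝ)) ∧
      ∀ t ∈ Set.Icc (-(k:ℝ)) (k:ℝ), dist (v t) ((Classical.choose (hx k)) t) < 1/(k+1) := by
    intro k
    obtain ⟨hu_all, hu0⟩ := Classical.choose_spec (hx k)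
    obtain ⟨un, hun, hconv⟩ := hu_all (-(k:ℝ))
    obtain ⟨N, hN⟩ := hconv (k:ℝ) (by simp [neg_le_self_iff]) (1/(k+1))
      (by positivity)
    exact ⟨un N, hun N, fun t ht => hN N (le_refl N) t ht⟩
  choose v hvmem hvclose using happ
  have hmem : ∀ m : ℕ, ∃ K, ∀ n ≥ K, v n ∈ es.E (-(m:ℝ)) := by
    intro m
    refine ⟨m, fun n hn => es.restrict _ _ ?_ (hvmem n)⟩
    simp only [neg_le_neg_iff]; exact_mod_cast hn
  obtain ⟨δ, hδ, u, hucomp, hconv0⟩ := key_lemma es hA1 v hmem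
  refine ⟨u, hucomp, ?_⟩
  -- u 0 = p
  apply eq_of_forall_dist_le
  intro ε hε
  -- x k → p
  rw [Metric.tendsto_atTop] at hxp
  obtain ⟨K₁, hK₁⟩ := hxp (ε/3) (by linarith)
  obtain ⟨K₂, hK₂⟩ := hconv0 (ε/3) (by linarith)
  obtain ⟨K₃, hK₃⟩ : ∃ K₃ : ℕ, (1 : ℝ)/(K₃+1) < ε/3 := by
    obtain ⟨K₃, h⟩ := exists_nat_one_div_lt (show (0:ℝ) < ε/3 by linarith)
    exact ⟨K₃, h⟩
  set n := max (max K₁ K₂) K₃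
  have hn1 : K₁ ≤ δ n := le_trans (le_trans (le_max_left _ _) (le_max_left _ _)) hδ.le_apply
  have hn2 : n ≥ K₂ := le_trans (le_max_right _ _) (le_max_left _ _) |>.trans (le_refl _)
  have hd1 : dist (x (δ n)) p < ε/3 := hK₁ (δ n) hn1
  have hd2 : dist (v (δ n) 0) (u 0) < ε/3 := hK₂ n (le_trans (le_trans (le_max_right _ _) (le_max_left _ _)) (le_refl _))
  have hd3 : dist (v (δ n) 0) (x (δ n)) < ε/3 := by
    have h0 : (0:ℝ) ∈ Set.Icc (-((δ n : ℕ):ℝ)) ((δ n : ℕ):ℝ) := by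
      constructor <;> simp
    have := hvclose (δ n) 0 h0
    have hx0 : (Classical.choose (hx (δ n))) 0 = x (δ n) := (Classical.choose_spec (hx (δ n))).2
    rw [hx0] at this
    calc dist (v (δ n) 0) (x (δ n)) < 1/((δ n : ℕ)+1) := this
      _ ≤ 1/((K₃:ℝ)+1) := by
          apply one_div_le_one_div_of_le (by positivity)
          have : (K₃ : ℝ) ≤ (δ n : ℝ) := by
            exact_mod_cast le_trans (le_max_right _ _) hδ.le_apply
          linarith
      _ < ε/3 := hK₃
  calc dist (u 0) p ≤ dist (u 0) (v (δ n) 0) + dist (v (δ n) 0) (x (δ n)) + dist (x (δ n)) p :=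
        dist_triangle4 _ _ _ _
    _ ≤ ε := by rw [dist_comm (u 0)]; linarith

include hA1 in
lemma Astar_attracts : Attracts (ESmap es) (Astar es) := by
  by_contra hc
  simp only [Attracts, not_forall, not_exists, not_lt, gt_iff_lt] at hc
  obtain ⟨B, ε, hε, hbad⟩ := hc
  -- for each n, find t ≥ n and a bad point
  have hbad' : ∀ n : ℕ, ∃ t : ℝ, (n:ℝ) ≤ t ∧ ∃ v ∈ es.E 0, v 0 ∈ B ∧
      ∀ a ∈ Astar es, ε ≤ dist (v t) a := by
    intro n
    obtain ⟨t, ht, hnot⟩ := hbad (n : ℝ)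
    rw [Set.not_subset] at hnot
    obtain ⟨x, hx1, hx2⟩ := hnot
    obtain ⟨v, hv, hv0, hvt⟩ := hx1
    simp only [Set.mem_setOf_eq, not_exists] at hx2
    refine ⟨t, ht, v, hv, hv0, fun a ha => ?_⟩
    rw [hvt]
    by_contra hlt
    push_neg at hlt
    exact hx2 a ⟨ha, hlt⟩
  choose ts hts vs hvs hvs0 hfar using hbad'
  set w : ℕ → ℝ → X := fun n s => vs n (s + ts n) with hw_def
  have hmem : ∀ m : ℕ, ∃ K, ∀ n ≥ K, w n ∈ es.E (-(m:ℝ)) := by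
    intro m
    refine ⟨m, fun n hn => ?_⟩
    have h1 : w n ∈ es.E (-(ts n)) := shift_mem_Eneg es (vs n) (ts n) (hvs n)
    apply es.restrict _ _ _ h1
    have : (m:ℝ) ≤ ts n := le_trans (by exact_mod_cast hn) (hts n)
    linarith
  obtain ⟨δ, hδ, u, hucomp, hconv0⟩ := key_lemma es hA1 w hmem
  obtain ⟨N, hN⟩ := hconv0 ε hε
  have h1 : dist (w (δ N) 0) (u 0) < ε := hN N (le_refl N)
  have h2 : ε ≤ dist (vs (δ N) (ts (δ N))) (u 0) := hfar (δ N) (u 0) ⟨u, hucomp, rfl⟩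
  have h3 : w (δ N) 0 = vs (δ N) (ts (δ N)) := by simp [hw_def]
  rw [h3] at h1
  linarith

include hA1 in
lemma Astar_attracts_bar : Attracts (ESmapBar es) (Astar es) := by
  intro B ε hε
  obtain ⟨t₀, ht₀⟩ := Astar_attracts es hA1 Set.univ (ε/2) (by linarith)
  refine ⟨max t₀ 0, fun t ht x hx => ?_⟩
  obtain ⟨v, hv, _, hvt⟩ := hx
  obtain ⟨un, hun, hconv⟩ := hv
  have ht0 : (0:ℝ) ≤ t := le_trans (le_max_right _ _) ht
  obtain ⟨N, hN⟩ := hconv t ht0 (ε/2) (by linarith)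
  have hclose : dist (un N t) (v t) < ε/2 := hN N (le_refl N) t ⟨ht0, le_refl t⟩
  have hmem : un N t ∈ ESmap es t Set.univ := ⟨un N, hun N, trivial, rfl⟩
  obtain ⟨a, ha, hd⟩ := ht₀ t (le_trans (le_max_left _ _) ht) hmem
  refine ⟨a, ha, ?_⟩
  calc dist x a ≤ dist x (un N t) + dist (un N t) a := dist_triangle _ _ _
    _ < ε := by
        rw [← hvt, dist_comm (v t)]
        linarith

lemma Astar_minimal : ∀ 𝒜' : Set X, IsClosed 𝒜' → Attracts (ESmap es) 𝒜' →
    Astar es ⊆ 𝒜' := by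
  intro A' hA'closed hA'attr x hx
  obtain ⟨u, hucomp, hu0⟩ := hx
  rw [← hA'closed.closure_eq, Metric.mem_closure_iff]
  intro ε hε
  obtain ⟨t₀, ht₀⟩ := hA'attr Set.univ (ε/2) (by linarith)
  set t := max t₀ 0 with ht_def
  have htt₀ : t₀ ≤ t := le_max_left _ _
  have ht0 : (0:ℝ) ≤ t := le_max_right _ _
  obtain ⟨un, hun, hconv⟩ := hucomp (-t)
  obtain ⟨N, hN⟩ := hconv 0 (by linarith) (ε/2) (by linarith)
  have hclose : dist (un N 0) (u 0) < ε/2 := hN N (le_refl N) 0 ⟨by linarith, le_refl 0⟩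
  set v : ℝ → X := fun s => un N (s - t) with hv_def
  have hvE : v ∈ es.E 0 := shift_mem_E0 es (un N) t (hun N)
  have hvmem : un N 0 ∈ ESmap es t Set.univ := by
    refine ⟨v, hvE, trivial, ?_⟩
    simp [hv_def]
  obtain ⟨a, ha, hd⟩ := ht₀ t htt₀ hvmem
  refine ⟨a, ha, ?_⟩
  calc dist x a ≤ dist x (un N 0) + dist (un N 0) a := dist_triangle _ _ _
    _ < ε := by
        rw [← hu0, dist_comm (u 0)]
        linarith

lemma E0_subset_closE : es.E 0 ⊆ closE es 0 := by
  intro u hu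
  exact ⟨fun _ => u, fun _ => hu, fun b hb ε hε => ⟨0, fun n hn t ht => by simp [hε]⟩⟩

lemma ESmap_subset_ESmapBar (t : ℝ) (A : Set X) : ESmap es t A ⊆ ESmapBar es t A := by
  rintro x ⟨u, hu, h0, hxt⟩
  exact ⟨u, E0_subset_closE es hu, h0, hxt⟩

lemma Astar_minimal_bar : ∀ 𝒜' : Set X, IsClosed 𝒜' → Attracts (ESmapBar es) 𝒜' →
    Astar es ⊆ 𝒜' := by
  intro A' hcl hattr
  apply Astar_minimal es A' hcl
  intro B ε hε
  obtain ⟨t₀, ht₀⟩ := hattr B ε hε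
  exact ⟨t₀, fun t ht => (Set.Subset.trans (ESmap_subset_ESmapBar es t B) (ht₀ t ht))⟩

end Main

/-- for `E` satisfying A1, the weak uniform global attractors of `E` and of its
closure `Ē` exist, coincide, and equal `{u(0) : u ∈ Ē((−∞,∞))}`. -/
theorem stmt6 {X : Type*} [MetricSpace X] [CompactSpace X]
    (es : EvolutionarySystem X) (hA1 : A1 es) :
    (∃ 𝒜 : Set X, IsGA (ESmap es) 𝒜 ∧ IsGA (ESmapBar es) 𝒜 ∧
      𝒜 = {x | ∃ u : ℝ → X, (∀ τ, u ∈ closE es τ) ∧ u 0 = x}) ∧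
    (∀ 𝒜 𝒜' : Set X, IsGA (ESmap es) 𝒜 → IsGA (ESmapBar es) 𝒜' →
      𝒜 = 𝒜' ∧ 𝒜 = {x | ∃ u : ℝ → X, (∀ τ, u ∈ closE es τ) ∧ u 0 = x}) := by
  have hGA : IsGA (ESmap es) (Astar es) :=
    ⟨Astar_closed es hA1, Astar_attracts es hA1, Astar_minimal es⟩
  have hGAbar : IsGA (ESmapBar es) (Astar es) :=
    ⟨Astar_closed es hA1, Astar_attracts_bar es hA1, Astar_minimal_bar es⟩
  have hAstar_eq : Astar es = {x | ∃ u : ℝ → X, (∀ τ, u ∈ closE es τ) ∧ u 0 = x} := rfl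
  refine ⟨⟨Astar es, hGA, hGAbar, hAstar_eq⟩, fun 𝒜 𝒜' h h' => ?_⟩
  have h1 : 𝒜 = Astar es :=
    Set.Subset.antisymm (h.2.2 (Astar es) hGA.1 hGA.2.1) (hGA.2.2 𝒜 h.1 h.2.1)
  have h2 : 𝒜' = Astar es :=
    Set.Subset.antisymm (h'.2.2 (Astar es) hGAbar.1 hGAbar.2.1) (hGAbar.2.2 𝒜' h'.1 h'.2.1)
  rw [h1, h2]
  exact ⟨rfl, hAstar_eq⟩
end

section
/- Let E be an asymptotically compact evolutionary system satisfying A1, and Ē its closure. Then for every ε > 0 and T > 0 there exists t₀ such that for every t* > t₀ and every trajectory u ∈ E([0,∞)) there is a complete trajectory v ∈ Ē((−∞,∞)) with d_s(u(t), v(t)) < ε for all t ∈ [t*, t*+T] (strong uniform tracking property). -/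
/-- Asymptotic compactness of `E` w.r.t. the strong metric `ds`: for `t_k → ∞` and
`x_k ∈ R(t_k)X`, `{x_k}` has a `ds`-convergent subsequence. -/
def AsympCompact {X : Type*} (ds : X → X → ℝ) (es : EvolutionarySystem X) : Prop :=
  ∀ (tk : ℕ → ℝ) (xk : ℕ → X),
    Filter.Tendsto tk Filter.atTop Filter.atTop →
    (∀ k, xk k ∈ ESmap es (tk k) Set.univ) →
    ∃ (φ : ℕ → ℕ) (x : X), StrictMono φ ∧
      Filter.Tendsto (fun k => ds (xk (φ k)) x) Filter.atTop (nhds 0)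

def natChain {S : ℕ → Sort*} (base : S 0) (step : ∀ m, S m → S (m+1)) : ∀ m, S m
  | 0 => base
  | m+1 => step m (natChain base step m)

def Conv7 {X : Type*} [MetricSpace X] (w : ℕ → ℝ → X) (j : ℕ) (φ : ℕ → ℕ) : Prop :=
  ∃ g : ℝ → X, ∀ b ≥ (0:ℝ), ∀ ε > 0, ∃ N, ∀ n ≥ N, ∀ s ∈ Set.Icc (0:ℝ) b,
    dist (w (φ n) (s - (j:ℝ))) (g s) < ε

def Good7 {X : Type*} [MetricSpace X] (w : ℕ → ℝ → X) (m : ℕ) (φ : ℕ → ℕ) : Prop :=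
  StrictMono φ ∧ ∀ j ≤ m, Conv7 w j φ

theorem conv7_comp {X : Type*} [MetricSpace X] {w : ℕ → ℝ → X} {j : ℕ} {φ : ℕ → ℕ}
    (h : Conv7 w j φ) {τ : ℕ → ℕ} (hτ : ∀ n, n ≤ τ n) : Conv7 w j (φ ∘ τ) := by
  obtain ⟨g, hg⟩ := h
  refine ⟨g, fun b hb ε hε => ?_⟩
  obtain ⟨N, hN⟩ := hg b hb ε hε
  exact ⟨N, fun n hn s hs => hN (τ n) (le_trans hn (hτ n)) s hs⟩

theorem step7 {X : Type*} [MetricSpace X] {es : EvolutionarySystem X} (hA1 : A1 es)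
    (w : ℕ → ℝ → X)
    (hshift : ∀ (m k : ℕ), m ≤ k → (fun s => w k (s - (m:ℝ))) ∈ es.E 0)
    (m : ℕ) (φ : ℕ → ℕ) (h : Good7 w m φ) :
    ∃ τ : ℕ → ℕ, StrictMono τ ∧ (∀ n, n ≤ τ n) ∧ Good7 w (m+1) (φ ∘ τ) := by
  obtain ⟨ρ, hρ, g, hg⟩ := hA1 (fun n => fun s => w (φ (n + (m+1))) (s - ((m+1:ℕ):ℝ)))
    (fun n => hshift (m+1) (φ (n + (m+1))) (le_trans (Nat.le_add_left _ _) h.1.le_apply))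
  have hτmono : StrictMono (fun n => ρ n + (m+1)) :=
    fun a b hab => Nat.add_lt_add_right (hρ hab) _
  refine ⟨fun n => ρ n + (m+1), hτmono,
    fun n => le_trans hρ.le_apply (Nat.le_add_right _ _), h.1.comp hτmono, fun j hj => ?_⟩
  rcases Nat.lt_succ_iff_lt_or_eq.mp (Nat.lt_succ_of_le hj) with hj' | hj'
  · exact conv7_comp (h.2 j (Nat.lt_succ_iff.mp hj'))
      (fun n => le_trans hρ.le_apply (Nat.le_add_right _ _))
  · subst hj'
    exact ⟨g, hg⟩

theorem chain7 {X : Type*} [MetricSpace X] (es : EvolutionarySystem X) (hA1 : A1 es)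
    (w : ℕ → ℝ → X)
    (hshift : ∀ (m k : ℕ), m ≤ k → (fun s => w k (s - (m:ℝ))) ∈ es.E 0) :
    ∃ c : ℕ → ℕ → ℕ, (∀ m, Good7 w m (c m)) ∧
      ∀ m, ∃ τ : ℕ → ℕ, (∀ n, n ≤ τ n) ∧ c (m+1) = c m ∘ τ := by
  obtain ⟨φ₀, hφ₀, g, hg⟩ := hA1 (fun n => fun s => w n (s - ((0:ℕ):ℝ)))
    (fun n => hshift 0 n (Nat.zero_le n))
  have hbase : Good7 w 0 φ₀ := ⟨hφ₀, fun j hj => by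
    rw [Nat.le_zero.mp hj]; exact ⟨g, hg⟩⟩
  have hstep : ∀ (m : ℕ) (p : {f : ℕ → ℕ // Good7 w m f}),
      ∃ τ : ℕ → ℕ, StrictMono τ ∧ (∀ n, n ≤ τ n) ∧ Good7 w (m+1) (p.1 ∘ τ) :=
    fun m p => step7 hA1 w hshift m p.1 p.2
  choose τf hτf1 hτf2 hτf3 using hstep
  exact
    let stp : ∀ m, {f : ℕ → ℕ // Good7 w m f} → {f : ℕ → ℕ // Good7 w (m+1) f} :=
      fun m p => ⟨p.1 ∘ τf m p, hτf3 m p⟩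
    let c := natChain ⟨φ₀, hbase⟩ stp
    ⟨fun m => (c m).1, fun m => (c m).2, fun m => ⟨τf m (c m), hτf2 m (c m), rfl⟩⟩

theorem diagonal_limit {X : Type*} [MetricSpace X] (es : EvolutionarySystem X) (hA1 : A1 es)
    (w : ℕ → ℝ → X)
    (hshift : ∀ (m k : ℕ), m ≤ k → (fun s => w k (s - (m:ℝ))) ∈ es.E 0) :
    ∃ ψ : ℕ → ℕ, StrictMono ψ ∧ ∃ v : ℝ → X,
      (∀ t : ℝ, Filter.Tendsto (fun n => w (ψ n) t) Filter.atTop (nhds (v t))) ∧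
      ∀ (j : ℕ) (b : ℝ), ∀ ε > 0, ∃ N, ∀ n ≥ N, ∀ t ∈ Set.Icc (-(j:ℝ)) b,
        dist (w (ψ n) t) (v t) < ε := by
  obtain ⟨c, hG, hlink⟩ := chain7 es hA1 w hshift
  choose τ hτle hτeq using hlink
  have hψ : StrictMono (fun n => c n n) := strictMono_nat_of_lt_succ (fun n => by
    have h1 : c (n+1) (n+1) = c n (τ n (n+1)) := by rw [hτeq n]; rfl
    rw [h1]
    exact lt_of_lt_of_le ((hG n).1 (Nat.lt_succ_self n)) ((hG n).1.monotone (hτle n (n+1))))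
  have hdiag : ∀ j n, j ≤ n → ∃ n', n ≤ n' ∧ c n n = c j n' := by
    have key : ∀ (j d n : ℕ), ∃ n', n ≤ n' ∧ c (j + d) n = c j n' := by
      intro j d
      induction d with
      | zero => exact fun n => ⟨n, le_rfl, rfl⟩
      | succ d ih =>
        intro n
        obtain ⟨n', hn', he⟩ := ih (τ (j + d) n)
        exact ⟨n', le_trans (hτle (j+d) n) hn',
          by rw [← add_assoc, hτeq (j+d)]; exact he⟩
    intro j n hj
    obtain ⟨n', h1, h2⟩ := key j (n - j) n
    rw [show j + (n - j) = n from by omega] at h2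
    exact ⟨n', h1, h2⟩
  have hconvψ : ∀ j : ℕ, ∃ g : ℝ → X, ∀ b ≥ (0:ℝ), ∀ ε > 0, ∃ N, ∀ n ≥ N,
      ∀ s ∈ Set.Icc (0:ℝ) b, dist (w (c n n) (s - (j:ℝ))) (g s) < ε := by
    intro j
    obtain ⟨g, hg⟩ := (hG j).2 j le_rfl
    refine ⟨g, fun b hb ε hε => ?_⟩
    obtain ⟨N, hN⟩ := hg b hb ε hε
    refine ⟨max N j, fun n hn s hs => ?_⟩
    obtain ⟨n', hn', he⟩ := hdiag j n (le_trans (le_max_right N j) hn)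
    rw [he]
    exact hN n' (le_trans (le_trans (le_max_left N j) hn) hn') s hs
  choose gm hgm using hconvψ
  have hpt : ∀ (j : ℕ) (t : ℝ), -(j:ℝ) ≤ t →
      Filter.Tendsto (fun n => w (c n n) t) Filter.atTop (nhds (gm j (t + j))) := by
    intro j t ht
    rw [Metric.tendsto_atTop]
    intro ε hε
    obtain ⟨N, hN⟩ := hgm j (t + j) (by linarith) ε hε
    refine ⟨N, fun n hn => ?_⟩
    have := hN n hn (t + j) ⟨by linarith, le_rfl⟩
    rwa [add_sub_cancel_right] at this
  have hceil : ∀ t : ℝ, -((⌈-t⌉₊ : ℕ) : ℝ) ≤ t := fun t => by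
    have := Nat.le_ceil (-t); linarith
  refine ⟨fun n => c n n, hψ, fun t => gm ⌈-t⌉₊ (t + ⌈-t⌉₊), fun t => hpt _ t (hceil t), ?_⟩
  intro j b ε hε
  obtain ⟨N, hN⟩ := hgm j (max 0 (b + j)) (le_max_left _ _) ε hε
  refine ⟨N, fun n hn t ht => ?_⟩
  have h2 := hN n hn (t + j) ⟨by linarith [ht.1], le_trans (by linarith [ht.2]) (le_max_right _ _)⟩
  rw [add_sub_cancel_right] at h2
  have hcoh : gm j (t + j) = gm ⌈-t⌉₊ (t + ⌈-t⌉₊) :=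
    tendsto_nhds_unique (hpt j t ht.1) (hpt ⌈-t⌉₊ t (hceil t))
  rwa [hcoh] at h2

theorem mem_E_iff {X : Type*} (es : EvolutionarySystem X) (u : ℝ → X) (a b : ℝ) :
    u ∈ es.E (b + a) ↔ (fun t => u (t + a)) ∈ es.E b := by
  rw [es.shift a b]; rfl

theorem mem_E_shift0 {X : Type*} (es : EvolutionarySystem X) (u : ℝ → X) (a : ℝ)
    (h : u ∈ es.E a) : (fun t => u (t + a)) ∈ es.E 0 := by
  rw [← mem_E_iff, zero_add]; exact h

theorem closE_shift {X : Type*} [MetricSpace X] (es : EvolutionarySystem X)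
    {u : ℝ → X} {τ : ℝ} (h : u ∈ closE es τ) (sft : ℝ) :
    (fun t => u (t - sft)) ∈ closE es (τ + sft) := by
  obtain ⟨un, hmem, hconv⟩ := h
  refine ⟨fun n t => un n (t - sft), fun n => ?_, ?_⟩
  · rw [es.shift sft τ]
    have he : (fun t => un n (t + sft - sft)) = un n := funext fun t => by ring_nf
    show (fun t => un n (t + sft - sft)) ∈ es.E τ
    rw [he]; exact hmem n
  · intro b hb ε hε
    obtain ⟨N, hN⟩ := hconv (b - sft) (by linarith) ε hε
    exact ⟨N, fun n hn t ht => hN n hn (t - sft) ⟨by linarith [ht.1], by linarith [ht.2]⟩⟩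

/-- strong uniform tracking: if `E` is asymptotically compact and satisfies A1,
then for every `ε > 0` and `T > 0` there is `t₀` such that every trajectory `u ∈ E([0,∞))`
is `ε`-shadowed in the strong metric on `[t*, t*+T]`, for every `t* > t₀`, by some complete
trajectory `v` of the closure `Ē`. -/
theorem stmt7 {X : Type*} [MetricSpace X] [CompactSpace X]
    (ds : X → X → ℝ)
    (hsymm : ∀ x y, ds x y = ds y x)
    (htri : ∀ x y z, ds x z ≤ ds x y + ds y z)
    (hzero : ∀ x y, ds x y = 0 ↔ x = y)
    (hsw : ∀ (un vn : ℕ → X),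
      Filter.Tendsto (fun n => ds (un n) (vn n)) Filter.atTop (nhds 0) →
      Filter.Tendsto (fun n => dist (un n) (vn n)) Filter.atTop (nhds 0))
    (es : EvolutionarySystem X)
    (hac : AsympCompact ds es) (hA1 : A1 es) :
    ∀ ε > 0, ∀ T > 0, ∃ t₀ : ℝ, ∀ tstar > t₀, ∀ u ∈ es.E 0,
      ∃ v : ℝ → X, (∀ τ, v ∈ closE es τ) ∧
        ∀ t ∈ Set.Icc tstar (tstar + T), ds (u t) (v t) < ε := by
  intro ε hε T hT
  by_contra hcon
  push_neg at hcon
  choose tk htk uk huk hP using fun k : ℕ => hcon (k : ℝ)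
  set W : ℕ → ℝ → X := fun k s => uk k (s + tk k) with hW
  have dsnonneg : ∀ x y : X, 0 ≤ ds x y := by
    intro x y
    have h1 : ds x x = 0 := (hzero x x).mpr rfl
    have h2 := htri x y x
    have h3 := hsymm y x
    linarith
  have hshift : ∀ (m k : ℕ), m ≤ k → (fun s => W k (s - (m:ℝ))) ∈ es.E 0 := by
    intro m k hmk
    have hcast : (m:ℝ) ≤ (k:ℝ) := Nat.cast_le.mpr hmk
    have h1 : uk k ∈ es.E (tk k - m) :=
      es.restrict 0 _ (by have := htk k; linarith) (huk k)
    have h2 := mem_E_shift0 es (uk k) (tk k - m) h1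
    have h3 : (fun t => uk k (t + (tk k - m))) = fun s => W k (s - m) := by
      simp only [hW]
      exact funext fun t => congrArg (uk k) (by ring)
    rw [← h3]; exact h2
  have hWE : ∀ (k : ℕ) (τ : ℝ), -tk k ≤ τ → W k ∈ es.E τ := by
    intro k τ hτ
    have h0 : W k ∈ es.E (0 + -tk k) := by
      rw [mem_E_iff]
      have he : (fun t => W k (t + -tk k)) = uk k := by
        simp only [hW]
        exact funext fun t => congrArg (uk k) (by ring)
      rw [he]; exact huk k
    rw [zero_add] at h0
    exact es.restrict _ _ hτ h0
  obtain ⟨ψ, hψ, v, hvpt, hvu⟩ := diagonal_limit es hA1 W hshift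
  have hvmem : ∀ τ : ℝ, v ∈ closE es τ := by
    intro τ
    obtain ⟨j, hjτ⟩ : ∃ j : ℕ, -(j:ℝ) ≤ τ :=
      ⟨⌈-τ⌉₊, by have := Nat.le_ceil (-τ); linarith⟩
    refine ⟨fun n => W (ψ (n + j)), fun n => hWE _ τ ?_, ?_⟩
    · have h1 : (j:ℝ) ≤ (ψ (n + j) : ℝ) :=
        Nat.cast_le.mpr (le_trans (Nat.le_add_left j n) hψ.le_apply)
      have h2 := htk (ψ (n + j))
      linarith
    · intro b hb ε' hε'
      obtain ⟨N, hN⟩ := hvu j b ε' hε'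
      exact ⟨N, fun n hn t ht =>
        hN (n + j) (le_trans hn (Nat.le_add_right n j)) t ⟨le_trans hjτ ht.1, ht.2⟩⟩
  have hvsh : ∀ (k : ℕ) (τ : ℝ), (fun t => v (t - tk k)) ∈ closE es τ := by
    intro k τ
    have h := closE_shift es (hvmem (τ - tk k)) (tk k)
    rwa [sub_add_cancel] at h
  choose σ hσ hσds using fun n => hP (ψ n) (fun t => v (t - tk (ψ n))) (hvsh (ψ n))
  set s : ℕ → ℝ := fun n => σ n - tk (ψ n) with hs
  have hs0 : ∀ n, 0 ≤ s n := fun n => by simp only [hs]; linarith [(hσ n).1]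
  have hsT : ∀ n, s n ≤ T := fun n => by simp only [hs]; linarith [(hσ n).2]
  set q : ℕ → X := fun n => W (ψ n) (s n) with hq
  set a : ℕ → X := fun n => v (s n) with ha
  have hqeq : ∀ n, q n = uk (ψ n) (σ n) := fun n => by
    simp only [hq, hW, hs]; exact congrArg (uk (ψ n)) (by ring)
  have hεds : ∀ n, ε ≤ ds (q n) (a n) := fun n => by
    rw [hqeq n]; simp only [ha, hs]; exact hσds n
  have hdqa : Filter.Tendsto (fun n => dist (q n) (a n)) Filter.atTop (nhds 0) := by
    rw [Metric.tendsto_atTop]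
    intro ε' hε'
    obtain ⟨N, hN⟩ := hvu 0 T ε' hε'
    refine ⟨N, fun n hn => ?_⟩
    have h1 := hN n hn (s n) ⟨by push_cast; linarith [hs0 n], hsT n⟩
    rw [Real.dist_eq, sub_zero, abs_of_nonneg dist_nonneg]
    exact h1
  have hσtend : Filter.Tendsto σ Filter.atTop Filter.atTop := by
    apply Filter.tendsto_atTop_mono (fun n => ?_) tendsto_natCast_atTop_atTop
    have h1 : (n:ℝ) ≤ (ψ n:ℝ) := Nat.cast_le.mpr hψ.le_apply
    have h2 := htk (ψ n)
    have h3 := (hσ n).1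
    linarith
  obtain ⟨φ₁, x, hφ₁, hx⟩ := hac σ q hσtend
    (fun n => ⟨uk (ψ n), huk (ψ n), Set.mem_univ _, (hqeq n).symm⟩)
  have hainA : ∀ m : ℕ, ∃ (τs : ℕ → ℝ) (xs : ℕ → X),
      Filter.Tendsto τs Filter.atTop Filter.atTop ∧
      (∀ n, xs n ∈ ESmap es (τs n) Set.univ) ∧
      Filter.Tendsto (fun n => ds (xs n) (a m)) Filter.atTop (nhds 0) := by
    intro m
    have happ : ∀ i : ℕ, ∃ p : X,
        p ∈ ESmap es (s m + i) Set.univ ∧ dist p (a m) < 1/(i+1) := by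
      intro i
      have hi0 : (0:ℝ) ≤ (i:ℝ) := Nat.cast_nonneg i
      obtain ⟨un, hunm, hunc⟩ := hvmem (-(i:ℝ))
      obtain ⟨N, hN⟩ := hunc (s m) (by linarith [hs0 m]) ((1:ℝ)/(i+1)) (by positivity)
      refine ⟨un N (s m), ⟨fun t => un N (t + -(i:ℝ)),
        mem_E_shift0 es (un N) _ (hunm N), Set.mem_univ _, ?_⟩, ?_⟩
      · exact congrArg (un N) (by ring)
      · have h1 := hN N le_rfl (s m) ⟨by linarith [hs0 m], le_rfl⟩
        simp only [ha]
        exact h1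
    choose p hpmem hpdist using happ
    have hptend : Filter.Tendsto (fun i : ℕ => s m + i) Filter.atTop Filter.atTop := by
      apply Filter.tendsto_atTop_mono (fun i => ?_) tendsto_natCast_atTop_atTop
      linarith [hs0 m]
    obtain ⟨φ', z, hφ', hz⟩ := hac (fun i => s m + i) p hptend hpmem
    have h1 : Filter.Tendsto (fun i => dist (p (φ' i)) z) Filter.atTop (nhds 0) :=
      hsw (fun i => p (φ' i)) (fun _ => z) (by exact hz)
    have h2 : Filter.Tendsto (fun i => dist (p (φ' i)) (a m)) Filter.atTop (nhds 0) := by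
      refine squeeze_zero (fun _ => dist_nonneg) (fun i => ?_)
        tendsto_one_div_add_atTop_nhds_zero_nat
      calc dist (p (φ' i)) (a m) ≤ 1/(φ' i + 1) := (hpdist (φ' i)).le
        _ ≤ 1/((i:ℝ)+1) := by
          apply one_div_le_one_div_of_le (by positivity)
          have : (i:ℝ) ≤ (φ' i : ℝ) := Nat.cast_le.mpr hφ'.le_apply
          linarith
    have hzeq : z = a m := by
      have h1' : Filter.Tendsto (fun i => dist z (p (φ' i))) Filter.atTop (nhds 0) := by
        simpa [dist_comm] using h1
      have hb : Filter.Tendsto (fun i => dist z (p (φ' i)) + dist (p (φ' i)) (a m))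
          Filter.atTop (nhds 0) := by simpa using h1'.add h2
      have hle := ge_of_tendsto hb
        (Filter.Eventually.of_forall fun i => dist_triangle z (p (φ' i)) (a m))
      exact dist_le_zero.mp hle
    rw [hzeq] at hz
    refine ⟨fun i => s m + φ' i, fun i => p (φ' i), ?_, fun i => hpmem (φ' i), hz⟩
    apply Filter.tendsto_atTop_mono (fun i => ?_) tendsto_natCast_atTop_atTop
    have : (i:ℝ) ≤ (φ' i : ℝ) := Nat.cast_le.mpr hφ'.le_apply
    linarith [hs0 m]
  have hex : ∀ n : ℕ, ∃ (pt : X) (τp : ℝ), (n:ℝ) ≤ τp ∧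
      pt ∈ ESmap es τp Set.univ ∧ ds pt (a (φ₁ n)) < 1/(n+1) := by
    intro n
    obtain ⟨τs, xs, hτs, hxsm, hxds⟩ := hainA (φ₁ n)
    have e1 : ∀ᶠ i in Filter.atTop, (n:ℝ) ≤ τs i := hτs.eventually_ge_atTop _
    have e2 : ∀ᶠ i in Filter.atTop, ds (xs i) (a (φ₁ n)) < 1/(n+1) :=
      hxds.eventually_lt_const (by positivity)
    obtain ⟨i, h1, h2⟩ := (e1.and e2).exists
    exact ⟨xs i, τs i, h1, hxsm i, h2⟩
  choose pt τp hτp hptm hptds using hex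
  obtain ⟨φ₂, y, hφ₂, hy⟩ := hac τp pt
    (Filter.tendsto_atTop_mono hτp tendsto_natCast_atTop_atTop) hptm
  have hay : Filter.Tendsto (fun n => ds (a (φ₁ (φ₂ n))) y) Filter.atTop (nhds 0) := by
    have hg : Filter.Tendsto (fun n : ℕ => 1/((n:ℝ)+1) + ds (pt (φ₂ n)) y)
        Filter.atTop (nhds 0) := by
      simpa using tendsto_one_div_add_atTop_nhds_zero_nat.add hy
    refine squeeze_zero (fun n => dsnonneg _ _) (fun n => ?_) hg
    calc ds (a (φ₁ (φ₂ n))) y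
        ≤ ds (a (φ₁ (φ₂ n))) (pt (φ₂ n)) + ds (pt (φ₂ n)) y := htri _ _ _
      _ ≤ 1/((n:ℝ)+1) + ds (pt (φ₂ n)) y := by
          rw [hsymm]
          have h1 : ds (pt (φ₂ n)) (a (φ₁ (φ₂ n))) < 1/(φ₂ n + 1) := hptds (φ₂ n)
          have h2 : (1:ℝ)/(φ₂ n + 1) ≤ 1/((n:ℝ)+1) := by
            apply one_div_le_one_div_of_le (by positivity)
            have : (n:ℝ) ≤ (φ₂ n : ℝ) := Nat.cast_le.mpr hφ₂.le_apply
            linarith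
          linarith
  have hqx : Filter.Tendsto (fun n => ds (q (φ₁ (φ₂ n))) x) Filter.atTop (nhds 0) :=
    hx.comp hφ₂.tendsto_atTop
  have hdqx : Filter.Tendsto (fun n => dist (q (φ₁ (φ₂ n))) x) Filter.atTop (nhds 0) :=
    hsw (fun n => q (φ₁ (φ₂ n))) (fun _ => x) (by exact hqx)
  have hday : Filter.Tendsto (fun n => dist (a (φ₁ (φ₂ n))) y) Filter.atTop (nhds 0) :=
    hsw (fun n => a (φ₁ (φ₂ n))) (fun _ => y) (by exact hay)
  have hdqa2 : Filter.Tendsto (fun n => dist (q (φ₁ (φ₂ n))) (a (φ₁ (φ₂ n))))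
      Filter.atTop (nhds 0) := hdqa.comp (hφ₁.comp hφ₂).tendsto_atTop
  have hxy : x = y := by
    have hxq : Filter.Tendsto (fun n => dist x (q (φ₁ (φ₂ n)))) Filter.atTop (nhds 0) := by
      simpa [dist_comm] using hdqx
    have hb : Filter.Tendsto (fun n => dist x (q (φ₁ (φ₂ n))) +
        dist (q (φ₁ (φ₂ n))) (a (φ₁ (φ₂ n))) + dist (a (φ₁ (φ₂ n))) y)
        Filter.atTop (nhds 0) := by
      simpa using (hxq.add hdqa2).add hday
    have hle := ge_of_tendsto hb
      (Filter.Eventually.of_forall fun n => dist_triangle4 x _ _ y)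
    exact dist_le_zero.mp hle
  have hfin : Filter.Tendsto (fun n => ds (q (φ₁ (φ₂ n))) x + ds (a (φ₁ (φ₂ n))) y)
      Filter.atTop (nhds 0) := by
    simpa using hqx.add hay
  have hεle : ε ≤ 0 := by
    refine ge_of_tendsto hfin (Filter.Eventually.of_forall fun n => ?_)
    calc ε ≤ ds (q (φ₁ (φ₂ n))) (a (φ₁ (φ₂ n))) := hεds _
      _ ≤ ds (q (φ₁ (φ₂ n))) x + ds x (a (φ₁ (φ₂ n))) := htri _ _ _
      _ = ds (q (φ₁ (φ₂ n))) x + ds (a (φ₁ (φ₂ n))) y := by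
          rw [hsymm x, hxy]
  linarith
end

section
/- Let E be an asymptotically compact evolutionary system satisfying A1. Then the trajectory attractor 𝔄 uniformly attracts K⁺ = E([0,∞)) in L^∞_loc((0,∞); X_s): for every ε > 0 and 0 < a < b there exists t₀ such that for every t ≥ t₀ and every u ∈ K⁺ there is v ∈ 𝔄 with sup_{s∈[a,b]} d_s((T(t)u)(s), v(s)) < ε. -/
/-- The trajectory attractor `𝔄 = Π₊Ē((−∞,∞))`: restrictions to `[0,∞)` of complete
trajectories of the closure `Ē`. -/
def trajAttr {X : Type*} [MetricSpace X] (es : EvolutionarySystem X) : Set (ℝ → X) :=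
  {u | ∃ v : ℝ → X, (∀ τ, v ∈ closE es τ) ∧ ∀ t : ℝ, 0 ≤ t → u t = v t}

def Tshift {X : Type*} (s : ℝ) (u : ℝ → X) : ℝ → X := fun t => u (t + s)


section AuxStmt19

open Filter

variable {X : Type*} [MetricSpace X]

omit [MetricSpace X] in
private lemma ds_nonneg' (ds : X → X → ℝ)
    (hsymm : ∀ x y, ds x y = ds y x)
    (htri : ∀ x y z, ds x z ≤ ds x y + ds y z)
    (hzero : ∀ x y, ds x y = 0 ↔ x = y) (x y : X) : 0 ≤ ds x y := by
  have h0 : ds x x = 0 := (hzero x x).mpr rfl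
  have h1 := htri x y x
  have h2 := hsymm x y
  linarith

private lemma shift_mem_E0_s19 {Y : Type*} (es : EvolutionarySystem Y) (m : ℝ) (u : ℝ → Y)
    (hu : u ∈ es.E (-m)) : (fun t => u (t - m)) ∈ es.E 0 := by
  have h := es.shift m (-m)
  rw [neg_add_cancel] at h
  rw [h]
  show (fun t => (fun t' => u (t' - m)) (t + m)) ∈ es.E (-m)
  have heq : (fun t => (fun t' => u (t' - m)) (t + m)) = u := by funext t; simp
  rw [heq]; exact hu

private lemma A1_shift (es : EvolutionarySystem X) (hA1 : A1 es) (m : ℕ) (wn : ℕ → ℝ → X)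
    (hwn : ∀ n, wn n ∈ es.E (-(m:ℝ))) :
    ∃ φ : ℕ → ℕ, StrictMono φ ∧ ∃ u : ℝ → X,
      ∀ b, -(m:ℝ) ≤ b → ∀ ε > 0, ∃ N, ∀ n ≥ N, ∀ t ∈ Set.Icc (-(m:ℝ)) b,
        dist (wn (φ n) t) (u t) < ε := by
  have hE0 : ∀ n, (fun t => wn n (t - (m:ℝ))) ∈ es.E 0 :=
    fun n => shift_mem_E0_s19 es (m:ℝ) (wn n) (hwn n)
  obtain ⟨φ, hφ, u, hu⟩ := hA1 _ hE0
  refine ⟨φ, hφ, fun t => u (t + m), ?_⟩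
  intro b hb ε hε
  obtain ⟨N, hN⟩ := hu (b + m) (by linarith) ε hε
  refine ⟨N, fun n hn t ht => ?_⟩
  have h2 := hN n hn (t + m) ⟨by linarith [ht.1], by linarith [ht.2]⟩
  simpa using h2

private lemma diag_lemma (es : EvolutionarySystem X) (hA1 : A1 es) (w : ℕ → ℝ → X)
    (hw : ∀ m k : ℕ, m ≤ k → w k ∈ es.E (-(m:ℝ))) :
    ∃ (d : ℕ → ℕ) (v : ℝ → X), StrictMono d ∧ (∀ n, n ≤ d n) ∧ (∀ τ, v ∈ closE es τ) ∧
      ∀ (m : ℕ) (b : ℝ), -(m:ℝ) ≤ b → ∀ ε > 0, ∃ N, ∀ k ≥ N, ∀ t ∈ Set.Icc (-(m:ℝ)) b,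
        dist (w (d k) t) (v t) < ε := by
  classical
  set Good : ℕ → (ℕ → ℕ) → Prop := fun m f =>
    StrictMono f ∧ ∃ u : ℝ → X, ∀ b, -(m:ℝ) ≤ b → ∀ ε > 0, ∃ N, ∀ k ≥ N,
      ∀ t ∈ Set.Icc (-(m:ℝ)) b, dist (w (f k) t) (u t) < ε with hGood
  have base : ∃ f, Good 0 f := by
    obtain ⟨φ, hφ, u, hu⟩ := A1_shift es hA1 0 w (fun n => hw 0 n n.zero_le)
    exact ⟨φ, hφ, u, hu⟩
  have step : ∀ m : ℕ, ∀ f : ℕ → ℕ, Good m f →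
      ∃ g : ℕ → ℕ, StrictMono g ∧ (∀ n, n ≤ g n) ∧ Good (m+1) (fun n => f (g n)) := by
    intro m f hf
    have hmem : ∀ n, w (f (n + (m+1))) ∈ es.E (-((m+1:ℕ):ℝ)) := by
      intro n
      exact hw (m+1) (f (n + (m+1))) (le_trans (Nat.le_add_left _ _) (hf.1.le_apply))
    obtain ⟨θ, hθ, u, hu⟩ := A1_shift es hA1 (m+1) _ hmem
    refine ⟨fun n => θ n + (m+1), fun a b hab => by simpa using hθ hab,
      fun n => le_trans hθ.le_apply (Nat.le_add_right _ _), ?_, u, ?_⟩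
    · exact hf.1.comp (fun a b hab => by simpa using hθ hab)
    · intro b hb ε hε
      obtain ⟨N, hN⟩ := hu b (by exact_mod_cast hb) ε hε
      exact ⟨N, fun k hk t ht => hN k hk t (by exact_mod_cast ht)⟩
  choose g hg1 hg2 hg3 using step
  let F : (m : ℕ) → {f : ℕ → ℕ // Good m f} := fun m =>
    Nat.rec ⟨base.choose, base.choose_spec⟩
      (fun m ih => ⟨fun n => ih.1 (g m ih.1 ih.2 n), hg3 m ih.1 ih.2⟩) m
  have hFsucc : ∀ m, (F (m+1)).1 = fun n => (F m).1 (g m (F m).1 (F m).2 n) :=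
    fun m => rfl
  have hcompat : ∀ m j : ℕ, ∃ G : ℕ → ℕ, (∀ n, n ≤ G n) ∧
      ∀ n, (F (m + j)).1 n = (F m).1 (G n) := by
    intro m j
    induction j with
    | zero => exact ⟨id, fun n => le_refl n, fun n => rfl⟩
    | succ j ih =>
      obtain ⟨G, hG1, hG2⟩ := ih
      refine ⟨fun n => G (g (m+j) (F (m+j)).1 (F (m+j)).2 n), fun n => ?_, fun n => ?_⟩
      · exact le_trans (hg2 (m+j) (F (m+j)).1 (F (m+j)).2 n) (hG1 _)
      · show (F (m + j + 1)).1 n = _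
        rw [hFsucc (m+j)]
        exact hG2 _
  set d : ℕ → ℕ := fun k => (F k).1 k with hd
  have hdle : ∀ k, k ≤ d k := fun k => (F k).2.1.le_apply
  have hdmono : StrictMono d := by
    apply strictMono_nat_of_lt_succ
    intro k
    show (F k).1 k < (F (k+1)).1 (k+1)
    rw [hFsucc k]
    exact (F k).2.1 (lt_of_lt_of_le (Nat.lt_succ_self k)
      (hg2 k (F k).1 (F k).2 (k+1)))
  have hdc : ∀ m : ℕ, ∃ um : ℝ → X, ∀ b, -(m:ℝ) ≤ b → ∀ ε > 0, ∃ N, ∀ k ≥ N,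
      ∀ t ∈ Set.Icc (-(m:ℝ)) b, dist (w (d k) t) (um t) < ε := by
    intro m
    obtain ⟨um, hum⟩ := (F m).2.2
    refine ⟨um, fun b hb ε hε => ?_⟩
    obtain ⟨N, hN⟩ := hum b hb ε hε
    refine ⟨max N m, fun k hk t ht => ?_⟩
    have hmk : m ≤ k := le_trans (le_max_right N m) hk
    obtain ⟨G, hG1, hG2⟩ := hcompat m (k - m)
    have hdk : d k = (F m).1 (G k) := by
      have heq : m + (k - m) = k := Nat.add_sub_cancel' hmk
      have h := hG2 k
      rw [heq] at h
      exact h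
    rw [hdk]
    exact hN (G k) (le_trans (le_trans (le_max_left N m) hk) (hG1 k)) t ht
  choose u hu using hdc
  have huniq : ∀ (m m' : ℕ) (t : ℝ), -(m:ℝ) ≤ t → -(m':ℝ) ≤ t → u m t = u m' t := by
    intro m m' t hm hm'
    have h1 : Filter.Tendsto (fun k => w (d k) t) atTop (nhds (u m t)) := by
      rw [Metric.tendsto_atTop]
      intro ε hε
      obtain ⟨N, hN⟩ := hu m t hm ε hε
      exact ⟨N, fun k hk => hN k hk t ⟨hm, le_refl t⟩⟩
    have h2 : Filter.Tendsto (fun k => w (d k) t) atTop (nhds (u m' t)) := by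
      rw [Metric.tendsto_atTop]
      intro ε hε
      obtain ⟨N, hN⟩ := hu m' t hm' ε hε
      exact ⟨N, fun k hk => hN k hk t ⟨hm', le_refl t⟩⟩
    exact tendsto_nhds_unique h1 h2
  have hceil : ∀ t : ℝ, -((Nat.ceil (max 0 (-t)) : ℕ) : ℝ) ≤ t := by
    intro t
    have h1 : max 0 (-t) ≤ (Nat.ceil (max 0 (-t)) : ℝ) := Nat.le_ceil _
    have h2 : -t ≤ max 0 (-t) := le_max_right _ _
    linarith
  set v : ℝ → X := fun t => u (Nat.ceil (max 0 (-t))) t with hv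
  have hveq : ∀ (m : ℕ) (t : ℝ), -(m:ℝ) ≤ t → v t = u m t := by
    intro m t hm
    exact huniq _ m t (hceil t) hm
  refine ⟨d, v, hdmono, hdle, ?_, ?_⟩
  · intro τ
    obtain ⟨m, hm⟩ := exists_nat_ge (-τ)
    have hmτ : -(m:ℝ) ≤ τ := by linarith
    refine ⟨fun n => w (d (n + m)), fun n => ?_, fun b hb ε hε => ?_⟩
    · exact es.restrict _ _ hmτ
        (hw m (d (n + m)) (le_trans (Nat.le_add_left m n) (hdle (n+m))))
    · obtain ⟨N, hN⟩ := hu m b (le_trans hmτ hb) ε hε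
      refine ⟨N, fun n hn t ht => ?_⟩
      have h1 := hN (n + m) (le_trans hn (Nat.le_add_right n m)) t
        ⟨le_trans hmτ ht.1, ht.2⟩
      rwa [← hveq m t (le_trans hmτ ht.1)] at h1
  · intro m b hb ε hε
    obtain ⟨N, hN⟩ := hu m b hb ε hε
    refine ⟨N, fun k hk t ht => ?_⟩
    rw [hveq m t ht.1]
    exact hN k hk t ht

private lemma strong_from_weak (ds : X → X → ℝ)
    (hsw : ∀ (un vn : ℕ → X),
      Filter.Tendsto (fun n => ds (un n) (vn n)) Filter.atTop (nhds 0) →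
      Filter.Tendsto (fun n => dist (un n) (vn n)) Filter.atTop (nhds 0))
    (es : EvolutionarySystem X) (hac : AsympCompact ds es)
    (r : ℕ → ℝ) (hr : Filter.Tendsto r atTop atTop) (z : ℕ → X)
    (hz : ∀ k, z k ∈ ESmap es (r k) Set.univ) (p : X)
    (hweak : Filter.Tendsto (fun k => dist (z k) p) atTop (nhds 0)) :
    ∃ φ : ℕ → ℕ, StrictMono φ ∧
      Filter.Tendsto (fun k => ds (z (φ k)) p) atTop (nhds 0) := by
  obtain ⟨φ, q, hφ, hds⟩ := hac r z hr hz
  have hdq : Filter.Tendsto (fun k => dist (z (φ k)) q) atTop (nhds 0) :=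
    hsw (fun k => z (φ k)) (fun _ => q) hds
  have h1 : Filter.Tendsto (fun k => z (φ k)) atTop (nhds q) :=
    tendsto_iff_dist_tendsto_zero.mpr hdq
  have h2 : Filter.Tendsto (fun k => z (φ k)) atTop (nhds p) :=
    tendsto_iff_dist_tendsto_zero.mpr (hweak.comp hφ.tendsto_atTop)
  have hpq : p = q := tendsto_nhds_unique h2 h1
  rw [hpq]
  exact ⟨φ, hφ, hds⟩

private lemma point_approx (ds : X → X → ℝ)
    (hsw : ∀ (un vn : ℕ → X),
      Filter.Tendsto (fun n => ds (un n) (vn n)) Filter.atTop (nhds 0) →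
      Filter.Tendsto (fun n => dist (un n) (vn n)) Filter.atTop (nhds 0))
    (es : EvolutionarySystem X) (hac : AsympCompact ds es)
    (v : ℝ → X) (hv : ∀ τ, v ∈ closE es τ)
    (s : ℝ) (hs : 0 ≤ s) (η : ℝ) (hη : 0 < η) (R : ℝ) :
    ∃ (z : X) (r : ℝ), z ∈ ESmap es r Set.univ ∧ R ≤ r ∧
      ds z (v s) < η ∧ dist z (v s) < η := by
  have hc : ∀ M : ℕ, ∃ c : X, c ∈ ESmap es (s + M) Set.univ ∧
      dist c (v s) < 1 / (M + 1) := by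
    intro M
    obtain ⟨un, hun, hconv⟩ := hv (-(M:ℝ))
    have hMs : -(M:ℝ) ≤ s := le_trans (neg_nonpos.mpr (Nat.cast_nonneg M)) hs
    obtain ⟨N, hN⟩ := hconv s hMs (1/(M+1)) (by positivity)
    refine ⟨un N s, ?_, hN N (le_refl N) s ⟨hMs, le_refl s⟩⟩
    refine ⟨fun t => un N (t - (M:ℝ)), shift_mem_E0_s19 es (M:ℝ) (un N) (hun N),
      Set.mem_univ _, ?_⟩
    simp
  choose c hc1 hc2 using hc
  have hweak : Filter.Tendsto (fun M => dist (c M) (v s)) atTop (nhds 0) := by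
    apply squeeze_zero (fun M => dist_nonneg) (fun M => (hc2 M).le)
    exact tendsto_one_div_add_atTop_nhds_zero_nat
  have hr : Filter.Tendsto (fun M : ℕ => s + (M:ℝ)) atTop atTop :=
    tendsto_atTop_add_const_left _ s tendsto_natCast_atTop_atTop
  obtain ⟨φ, hφ, hds⟩ := strong_from_weak ds hsw es hac _ hr c hc1 (v s) hweak
  have hev1 : ∀ᶠ k in atTop, ds (c (φ k)) (v s) < η :=
    hds.eventually (gt_mem_nhds hη)
  have hev2 : ∀ᶠ k in atTop, dist (c (φ k)) (v s) < η :=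
    (hweak.comp hφ.tendsto_atTop).eventually (gt_mem_nhds hη)
  have hev3 : ∀ᶠ k in atTop, R ≤ s + ((φ k : ℕ) : ℝ) :=
    (hr.comp hφ.tendsto_atTop).eventually_ge_atTop R
  obtain ⟨k, ⟨h1, h2⟩, h3⟩ := ((hev1.and hev2).and hev3).exists
  exact ⟨c (φ k), s + (φ k : ℕ), hc1 (φ k), h3, h1, h2⟩

end AuxStmt19

/-- if `E` is asymptotically compact and satisfies A1, then the trajectory
attractor `𝔄` uniformly attracts `K⁺ = E([0,∞))` in `L^∞_loc((0,∞);X_s)`: for every `ε > 0`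
and `0 < a < b` there is `t₀` such that for all `t ≥ t₀` and all `u ∈ K⁺` there is `v ∈ 𝔄`
with `sup_{s∈[a,b]} d_s((T(t)u)(s), v(s)) < ε`. -/
theorem stmt19 {X : Type*} [MetricSpace X] [CompactSpace X]
    (ds : X → X → ℝ)
    (hsymm : ∀ x y, ds x y = ds y x)
    (htri : ∀ x y z, ds x z ≤ ds x y + ds y z)
    (hzero : ∀ x y, ds x y = 0 ↔ x = y)
    (hsw : ∀ (un vn : ℕ → X),
      Filter.Tendsto (fun n => ds (un n) (vn n)) Filter.atTop (nhds 0) →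
      Filter.Tendsto (fun n => dist (un n) (vn n)) Filter.atTop (nhds 0))
    (es : EvolutionarySystem X)
    (hac : AsympCompact ds es) (hA1 : A1 es) :
    ∀ ε > (0:ℝ), ∀ a b : ℝ, 0 < a → a < b →
      ∃ t₀ : ℝ, ∀ t, t₀ ≤ t → ∀ u ∈ es.E 0,
        ∃ v ∈ trajAttr es, ∀ s ∈ Set.Icc a b, ds (Tshift t u s) (v s) < ε := by
  intro ε hε a b ha hab
  by_contra hcon
  push_neg at hcon
  have H : ∀ k : ℕ, ∃ t, (k:ℝ) ≤ t ∧ ∃ u ∈ es.E 0, ∀ v ∈ trajAttr es,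
      ∃ s ∈ Set.Icc a b, ε ≤ ds (Tshift t u s) (v s) := fun k => hcon k
  choose T hT U hUmem hU using H
  set w : ℕ → ℝ → X := fun k => Tshift (T k) (U k) with hwdef
  have hw : ∀ m k : ℕ, m ≤ k → w k ∈ es.E (-(m:ℝ)) := by
    intro m k hmk
    have h1 : w k ∈ es.E (-(T k)) := by
      have h := es.shift (T k) (-(T k))
      rw [neg_add_cancel] at h
      have h2 := hUmem k
      rw [h] at h2
      exact h2
    have hmT : (m:ℝ) ≤ T k := le_trans (Nat.cast_le.mpr hmk) (hT k)
    exact es.restrict _ _ (by linarith) h1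
  obtain ⟨d, v, hdmono, hdle, hvclos, hconv⟩ := diag_lemma es hA1 w hw
  have hvA : v ∈ trajAttr es := ⟨v, hvclos, fun t _ => rfl⟩
  have hsk : ∀ k, ∃ s ∈ Set.Icc a b, ε ≤ ds (w (d k) s) (v s) :=
    fun k => hU (d k) v hvA
  choose s hs1 hs2 using hsk
  set x : ℕ → X := fun k => w (d k) (s k) with hxdef
  set r : ℕ → ℝ := fun k => s k + T (d k) with hrdef
  have hx : ∀ k, x k ∈ ESmap es (r k) Set.univ :=
    fun k => ⟨U (d k), hUmem (d k), Set.mem_univ _, rfl⟩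
  have hr : Filter.Tendsto r Filter.atTop Filter.atTop := by
    apply Filter.tendsto_atTop_mono _ tendsto_natCast_atTop_atTop
    intro k
    have h1 : (k:ℝ) ≤ (d k : ℝ) := Nat.cast_le.mpr (hdle k)
    have h2 : (d k : ℝ) ≤ T (d k) := hT (d k)
    have h3 : a ≤ s k := (hs1 k).1
    show (k:ℝ) ≤ s k + T (d k)
    linarith
  have hweakx : Filter.Tendsto (fun k => dist (x k) (v (s k))) Filter.atTop (nhds 0) := by
    rw [Metric.tendsto_atTop]
    intro ε' hε'
    obtain ⟨N, hN⟩ := hconv 0 b (by simpa using le_of_lt (lt_trans ha hab)) ε' hε'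
    refine ⟨N, fun k hk => ?_⟩
    have h1 := hN k hk (s k) ⟨by simpa using le_of_lt (lt_of_lt_of_le ha (hs1 k).1),
      (hs1 k).2⟩
    simpa [Real.dist_eq, abs_of_nonneg dist_nonneg] using h1
  obtain ⟨φ, p, hφ, hdsx⟩ := hac r x hr hx
  have hdistx : Filter.Tendsto (fun k => dist (x (φ k)) p) Filter.atTop (nhds 0) :=
    hsw (fun k => x (φ k)) (fun _ => p) hdsx
  have hdistv : Filter.Tendsto (fun k => dist (v (s (φ k))) p) Filter.atTop (nhds 0) := by
    have hsum := (hweakx.comp hφ.tendsto_atTop).add hdistx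
    rw [add_zero] at hsum
    apply squeeze_zero (fun k => dist_nonneg) _ hsum
    intro k
    calc dist (v (s (φ k))) p ≤ dist (v (s (φ k))) (x (φ k)) + dist (x (φ k)) p :=
          dist_triangle _ _ _
      _ = dist (x (φ k)) (v (s (φ k))) + dist (x (φ k)) p := by rw [dist_comm]
  have hzex : ∀ k : ℕ, ∃ (zz : X) (rr : ℝ), zz ∈ ESmap es rr Set.univ ∧ (k:ℝ) ≤ rr ∧
      ds zz (v (s (φ k))) < 1/(k+1) ∧ dist zz (v (s (φ k))) < 1/(k+1) :=
    fun k => point_approx ds hsw es hac v hvclos (s (φ k))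
      (le_of_lt (lt_of_lt_of_le ha (hs1 (φ k)).1)) (1/(k+1)) (by positivity) k
  choose z rr hz1 hz2 hz3 hz4 using hzex
  have hweakz : Filter.Tendsto (fun k => dist (z k) p) Filter.atTop (nhds 0) := by
    have hsum : Filter.Tendsto
        (fun k : ℕ => 1/((k:ℝ)+1) + dist (v (s (φ k))) p) Filter.atTop (nhds 0) := by
      have := tendsto_one_div_add_atTop_nhds_zero_nat.add hdistv
      rwa [add_zero] at this
    apply squeeze_zero (fun k => dist_nonneg) _ hsum
    intro k
    calc dist (z k) p ≤ dist (z k) (v (s (φ k))) + dist (v (s (φ k))) p :=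
          dist_triangle _ _ _
      _ ≤ 1/((k:ℝ)+1) + dist (v (s (φ k))) p := by
          have := (hz4 k).le; gcongr
  have hrz : Filter.Tendsto rr Filter.atTop Filter.atTop :=
    Filter.tendsto_atTop_mono hz2 tendsto_natCast_atTop_atTop
  obtain ⟨ψ, hψ, hdsz⟩ := strong_from_weak ds hsw es hac rr hrz z hz1 p hweakz
  have hterm1 : Filter.Tendsto (fun k => ds (x (φ (ψ k))) p) Filter.atTop (nhds 0) :=
    hdsx.comp hψ.tendsto_atTop
  have hterm2 : Filter.Tendsto (fun k => ds p (z (ψ k))) Filter.atTop (nhds 0) := by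
    have heq : (fun k => ds p (z (ψ k))) = (fun k => ds (z (ψ k)) p) :=
      funext fun k => hsymm _ _
    rw [heq]
    exact hdsz
  have hterm3 : Filter.Tendsto (fun k => ds (z (ψ k)) (v (s (φ (ψ k)))))
      Filter.atTop (nhds 0) := by
    apply squeeze_zero (fun k => ds_nonneg' ds hsymm htri hzero _ _) _
      tendsto_one_div_add_atTop_nhds_zero_nat
    intro k
    have h1 : ds (z (ψ k)) (v (s (φ (ψ k)))) < 1/((ψ k : ℕ)+1) := hz3 (ψ k)
    have h2 : 1/((ψ k : ℝ)+1) ≤ 1/((k:ℝ)+1) := by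
      apply one_div_le_one_div_of_le (by positivity)
      have hkψ : k ≤ ψ k := hψ.le_apply
      have : (k:ℝ) ≤ (ψ k : ℝ) := Nat.cast_le.mpr hkψ
      linarith
    calc ds (z (ψ k)) (v (s (φ (ψ k)))) ≤ 1/((ψ k : ℝ)+1) := by exact_mod_cast h1.le
      _ ≤ 1/((k:ℝ)+1) := h2
  have hfin : Filter.Tendsto (fun k => ds (x (φ (ψ k))) p + ds p (z (ψ k)) +
      ds (z (ψ k)) (v (s (φ (ψ k))))) Filter.atTop (nhds 0) := by
    have := (hterm1.add hterm2).add hterm3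
    simpa using this
  have hge : ∀ k, ε ≤ ds (x (φ (ψ k))) p + ds p (z (ψ k)) +
      ds (z (ψ k)) (v (s (φ (ψ k)))) := by
    intro k
    have h1 : ε ≤ ds (x (φ (ψ k))) (v (s (φ (ψ k)))) := hs2 (φ (ψ k))
    have h2 := htri (x (φ (ψ k))) p (v (s (φ (ψ k))))
    have h3 := htri p (z (ψ k)) (v (s (φ (ψ k))))
    linarith
  have hle : ε ≤ 0 := ge_of_tendsto hfin (Filter.Eventually.of_forall hge)
  linarith
end
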